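/- For every real number t with |t| ≤ 1 and every real α ≥ 1.60, one has α·t·(1 + t/2) ≤ e^{αt} − 1. -/

import Mathlib

/-!
For `t ≥ 0` the bound follows from `exp x ≥ 1 + x + x ^ 2 / 2`. On `[-1, 0]` the difference
`G t = exp (α t) - 1 - α t (1 + t / 2)` has derivative `α (exp (α t) - 1 - t)`, a convex function
vanishing at `t = 0`; it is therefore first positive and then negative, so `G` is unimodal and
`G t ≥ min (G (-1)) (G 0)`. As `G 0 = 0`, everything reduces to the endpoint inequality
`exp (-α) ≥ 1 - α / 2`, which holds for `α ≥ 8 / 5` because `exp (8 / 5) < 5`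
(the sharp threshold is `α ≈ 1.5936`).
-/

open Real Set

theorem min_le_of_mem_Icc_of_convexOn_deriv {f f' : ℝ → ℝ} {a b x : ℝ}
    (hf : ∀ y ∈ Icc a b, HasDerivAt f (f' y) y) (hf' : ConvexOn ℝ (Icc a b) f')
    (hb : f' b ≤ 0) (hx : x ∈ Icc a b) : min (f a) (f b) ≤ f x := by
  have hb' : b ∈ Icc a b := right_mem_Icc.2 (hx.1.trans hx.2)
  have hcont : ∀ {c d}, Icc c d ⊆ Icc a b → ContinuousOn f (Icc c d) := fun hcd y hy =>
    (hf y (hcd hy)).continuousAt.continuousWithinAt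
  have hderiv : ∀ {c d}, Icc c d ⊆ Icc a b →
      ∀ y ∈ interior (Icc c d), HasDerivWithinAt f (f' y) (interior (Icc c d)) y :=
    fun hcd y hy => (hf y (hcd (interior_subset hy))).hasDerivWithinAt
  rcases le_or_gt (f' x) 0 with hfx | hfx
  · have hsub : Icc x b ⊆ Icc a b := Icc_subset_Icc_left hx.1
    have hanti : AntitoneOn f (Icc x b) :=
      antitoneOn_of_hasDerivWithinAt_nonpos (convex_Icc x b) (hcont hsub) (hderiv hsub)
        fun y hy => (hf'.le_max_of_mem_Icc hx hb' (interior_subset hy)).trans (max_le hfx hb)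
    exact min_le_of_right_le (hanti (left_mem_Icc.2 hx.2) (right_mem_Icc.2 hx.2) hx.2)
  · have hsub : Icc a x ⊆ Icc a b := Icc_subset_Icc_right hx.2
    have hmono : MonotoneOn f (Icc a x) :=
      monotoneOn_of_hasDerivWithinAt_nonneg (convex_Icc a x) (hcont hsub) (hderiv hsub)
        fun y hy => by
          have hy' := interior_subset hy
          by_contra! hneg
          have := hf'.le_max_of_mem_Icc (hsub hy') hb' ⟨hy'.2, hx.2⟩
          exact (this.trans (max_le hneg.le hb)).not_gt hfx
    exact min_le_of_left_le (hmono (left_mem_Icc.2 hx.1) (right_mem_Icc.2 hx.1) hx.1)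

theorem exp_eight_fifths_lt_five : exp (8 / 5) < 5 := by
  have h : exp (8 / 5) ^ 5 < 5 ^ 5 := calc
    exp (8 / 5) ^ 5 = exp 1 ^ 8 := by rw [← exp_nat_mul, ← exp_nat_mul]; norm_num
    _ < 2.7182818286 ^ 8 := by gcongr; exact exp_one_lt_d9
    _ < 5 ^ 5 := by norm_num
  exact lt_of_pow_lt_pow_left₀ 5 (by norm_num) h

theorem one_sub_half_le_exp_neg {α : ℝ} (hα : 8 / 5 ≤ α) : 1 - α / 2 ≤ exp (-α) := by
  have h₀ : 1 / 5 < exp (-(8 / 5)) := by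
    rw [exp_neg, one_div]; exact inv_strictAnti₀ (exp_pos _) exp_eight_fifths_lt_five
  calc 1 - α / 2 ≤ 1 / 5 * (8 / 5 - α + 1) := by linarith
    _ ≤ 1 / 5 * exp (8 / 5 - α) := by gcongr; exact add_one_le_exp _
    _ ≤ exp (-(8 / 5)) * exp (8 / 5 - α) := by gcongr
    _ = exp (-α) := by rw [← exp_add]; ring_nf

theorem convexOn_mul_exp_mul_sub_add_one {α : ℝ} (hα : 0 ≤ α) :
    ConvexOn ℝ univ fun t => α * (exp (α * t) - (t + 1)) :=
  ((convexOn_exp.comp_linearMap (LinearMap.mulLeft ℝ α)).sub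
    ((concaveOn_id convex_univ).add_const 1)).smul hα

theorem mul_one_add_half_le_exp_sub_one_of_nonpos {α t : ℝ} (hα : 0 ≤ α)
    (hend : 1 - α / 2 ≤ exp (-α)) (ht : t ∈ Icc (-1) 0) :
    α * t * (1 + t / 2) ≤ exp (α * t) - 1 := by
  let G s := exp (α * s) - 1 - α * s * (1 + s / 2)
  have hG : ∀ s, HasDerivAt G (α * (exp (α * s) - (s + 1))) s := fun s => by
    have hlin := (hasDerivAt_id' s).const_mul α
    exact ((hlin.exp.sub_const 1).sub
      (hlin.mul (((hasDerivAt_id' s).div_const 2).const_add 1))).congr_deriv (by ring)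
  have hmin := min_le_of_mem_Icc_of_convexOn_deriv (fun s _ => hG s)
    ((convexOn_mul_exp_mul_sub_add_one hα).subset (subset_univ _) (convex_Icc _ _))
    (by simp) ht
  have hG_left : 0 ≤ G (-1) := by simp only [G, mul_neg_one]; linarith
  have hG_right : G 0 = 0 := by simp [G]
  have hGt : 0 ≤ G t := (le_min hG_left hG_right.ge).trans hmin
  simp only [G] at hGt
  linarith

theorem mul_one_add_half_le_exp_sub_one_of_nonneg {α t : ℝ} (hα : 1 ≤ α) (ht : 0 ≤ t) :
    α * t * (1 + t / 2) ≤ exp (α * t) - 1 := by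
  have hquad := quadratic_le_exp_of_nonneg (mul_nonneg (zero_le_one.trans hα) ht)
  nlinarith [mul_nonneg (mul_nonneg (sub_nonneg.2 hα) ht) ht]

theorem exp_lower_bound_alpha_ge (t α : ℝ) (ht : |t| ≤ 1) (hα : 1.60 ≤ α) :
    α * t * (1 + t / 2) ≤ Real.exp (α * t) - 1 := by
  have hα' : 8 / 5 ≤ α := by norm_num at hα ⊢; exact hα
  rcases le_total 0 t with ht₀ | ht₀
  · exact mul_one_add_half_le_exp_sub_one_of_nonneg (by linarith) ht₀
  · exact mul_one_add_half_le_exp_sub_one_of_nonpos (by linarith) (one_sub_half_le_exp_neg hα')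
      ⟨(abs_le.1 ht).1, ht₀⟩
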